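/- If T^{[1]} is an invertible block-Toeplitz matrix and the padded vector trick is used for multiplication, then for the 2-level case the padded input u^{[2]} defined by interleaving each sub-vector u_n of length N₁N₀ with (N₁−1)N₀ zeros and appending (N₂−1)(2N₁−1)N₀ trailing zeros has total length (2N₂−1)(2N₁−1)N₀, and extracting positions (1..N₁N₀) + n(2N₁−1)N₀ for n = 0..N₂−1 from C^{[2]}(T^{[2]}) u^{[2]} recovers T^{[2]} u. -/
import Mathlib


open Matrix

lemma wrap_eq (N : ℕ) (hN : 0 < N) (n : Fin N) (j : Fin (2 * N - 1)) (hj : (j : ℕ) < N) :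
    (if ((Fin.castLE (by omega : N ≤ 2 * N - 1) n - j : Fin (2 * N - 1)) : ℕ) < N
      then (((Fin.castLE (by omega : N ≤ 2 * N - 1) n - j : Fin (2 * N - 1)) : ℕ) : ℤ)
      else (((Fin.castLE (by omega : N ≤ 2 * N - 1) n - j : Fin (2 * N - 1)) : ℕ) : ℤ)
        - (2 * (N : ℤ) - 1))
    = (n : ℤ) - (j : ℕ) := by
  have hn := n.isLt
  have hjlt := j.isLt
  have hsub : ((Fin.castLE (by omega : N ≤ 2 * N - 1) n - j : Fin (2 * N - 1)) : ℕ)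
      = ((n : ℕ) + (2 * N - 1 - (j : ℕ))) % (2 * N - 1) := by
    simp [Fin.sub_def, Nat.add_comm]
  rcases le_or_gt (j : ℕ) (n : ℕ) with h | h
  · have h1 : ((n : ℕ) + (2 * N - 1 - (j : ℕ))) % (2 * N - 1) = (n : ℕ) - (j : ℕ) := by
      have h2 : (n : ℕ) + (2 * N - 1 - (j : ℕ)) = ((n : ℕ) - (j : ℕ)) + (2 * N - 1) := by
        omega
      rw [h2, Nat.add_mod_right, Nat.mod_eq_of_lt (by omega)]
    rw [hsub, h1]
    have h3 : (n : ℕ) - (j : ℕ) < N := by omega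
    simp only [h3, if_true]
    omega
  · have h1 : ((n : ℕ) + (2 * N - 1 - (j : ℕ))) % (2 * N - 1)
        = (n : ℕ) + (2 * N - 1) - (j : ℕ) := by
      rw [Nat.mod_eq_of_lt (by omega)]
      omega
    rw [hsub, h1]
    have h3 : ¬ ((n : ℕ) + (2 * N - 1) - (j : ℕ) < N) := by omega
    simp only [h3, if_false]
    omega

/-- 2-level padded-vector trick: padding `u` (interleaving each of the `N₂`
sub-vectors of length `N₁N₀` with `(N₁-1)N₀` zeros and appending the trailing
zeros, giving total length `(2N₂-1)(2N₁-1)N₀`), multiplying by the 2-level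
circulant embedding `C²(T²)`, and extracting positions
`(1..N₁N₀) + n(2N₁-1)N₀` recovers `T² u`. -/
theorem two_level_circulant_padded_trick (N₂ N₁ N₀ : ℕ)
    (hN₂ : 0 < N₂) (hN₁ : 0 < N₁)
    (R : ℤ → ℤ → Matrix (Fin N₀) (Fin N₀) ℂ)
    (T : Matrix (Fin N₂ × Fin N₁ × Fin N₀) (Fin N₂ × Fin N₁ × Fin N₀) ℂ)
    (hT : ∀ (i₂ j₂ : Fin N₂) (i₁ j₁ : Fin N₁) (a b : Fin N₀),
      T (i₂, i₁, a) (j₂, j₁, b) =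
        R ((i₂ : ℕ) - (j₂ : ℕ) : ℤ) ((i₁ : ℕ) - (j₁ : ℕ) : ℤ) a b)
    -- the level-wise wrapping maps of the circulant embedding
    (w₂ : Fin (2 * N₂ - 1) → ℤ)
    (hw₂ : ∀ i : Fin (2 * N₂ - 1),
      w₂ i = if (i : ℕ) < N₂ then ((i : ℕ) : ℤ) else (i : ℕ) - (2 * (N₂ : ℤ) - 1))
    (w₁ : Fin (2 * N₁ - 1) → ℤ)
    (hw₁ : ∀ i : Fin (2 * N₁ - 1),
      w₁ i = if (i : ℕ) < N₁ then ((i : ℕ) : ℤ) else (i : ℕ) - (2 * (N₁ : ℤ) - 1))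
    -- the 2-level circulant embedding of `T`
    (C : Matrix (Fin (2 * N₂ - 1) × Fin (2 * N₁ - 1) × Fin N₀)
                (Fin (2 * N₂ - 1) × Fin (2 * N₁ - 1) × Fin N₀) ℂ)
    (hC : ∀ (i₂ j₂ : Fin (2 * N₂ - 1)) (i₁ j₁ : Fin (2 * N₁ - 1)) (a b : Fin N₀),
      C (i₂, i₁, a) (j₂, j₁, b) = R (w₂ (i₂ - j₂)) (w₁ (i₁ - j₁)) a b)
    (u : Fin N₂ × Fin N₁ × Fin N₀ → ℂ)
    -- the padded input vector `u²`
    (upad : Fin (2 * N₂ - 1) × Fin (2 * N₁ - 1) × Fin N₀ → ℂ)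
    (hupad : ∀ (i₂ : Fin (2 * N₂ - 1)) (i₁ : Fin (2 * N₁ - 1)) (a : Fin N₀),
      upad (i₂, i₁, a) =
        if h : (i₂ : ℕ) < N₂ ∧ (i₁ : ℕ) < N₁ then
          u (⟨i₂, h.1⟩, ⟨i₁, h.2⟩, a)
        else 0) :
    ∀ (n₂ : Fin N₂) (n₁ : Fin N₁) (a : Fin N₀),
      C.mulVec upad (Fin.castLE (by omega) n₂, Fin.castLE (by omega) n₁, a) =
        T.mulVec u (n₂, n₁, a) := by
  intro n₂ n₁ a
  classical
  have hle₂ : N₂ ≤ 2 * N₂ - 1 := by omega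
  have hle₁ : N₁ ≤ 2 * N₁ - 1 := by omega
  set e : Fin N₂ × Fin N₁ × Fin N₀ → Fin (2 * N₂ - 1) × Fin (2 * N₁ - 1) × Fin N₀ :=
    fun p => (Fin.castLE hle₂ p.1, Fin.castLE hle₁ p.2.1, p.2.2) with he
  have einj : Function.Injective e := by
    rintro ⟨a1, b1, c1⟩ ⟨a2, b2, c2⟩ h
    simp only [he, Prod.mk.injEq] at h
    obtain ⟨h1, h2, h3⟩ := h
    exact Prod.ext (Fin.castLE_injective _ h1) (Prod.ext (Fin.castLE_injective _ h2) h3)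
  rw [mulVec, mulVec, dotProduct, dotProduct]
  rw [← Finset.sum_subset (Finset.subset_univ (Finset.univ.map ⟨e, einj⟩))]
  · rw [Finset.sum_map]
    apply Finset.sum_congr rfl
    rintro ⟨j₂, j₁, b⟩ -
    simp only [Function.Embedding.coeFn_mk, he]
    rw [hC, hT, hupad, hw₂, hw₁]
    have h2 := wrap_eq N₂ hN₂ n₂ (Fin.castLE hle₂ j₂) (by simpa using j₂.isLt)
    have h1 := wrap_eq N₁ hN₁ n₁ (Fin.castLE hle₁ j₁) (by simpa using j₁.isLt)
    simp only [Fin.coe_castLE] at h2 h1 ⊢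
    rw [h2, h1]
    rw [dif_pos ⟨by simpa using j₂.isLt, by simpa using j₁.isLt⟩]
  · rintro ⟨j₂, j₁, b⟩ - hnot
    have : ¬ ((j₂ : ℕ) < N₂ ∧ (j₁ : ℕ) < N₁) := by
      intro ⟨h1, h2⟩
      exact hnot (Finset.mem_map.mpr ⟨(⟨j₂, h1⟩, ⟨j₁, h2⟩, b), Finset.mem_univ _, rfl⟩)
    rw [hupad, dif_neg this, mul_zero]
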